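/- arXiv:1309.4418 — 2 statements merged into one kernel-verified Lean document; each statement's English description precedes it below -/
import Mathlib

section
/- Let H₀ be an n×n complex diagonal matrix with trace 0, let O(H₀) = {g H₀ g⁻¹ : g ∈ GL(n,ℂ)}, and let S(H₀) be the (finite) set of diagonal matrices belonging to O(H₀). For every ε > 0 there exists δ > 0 such that: for every x ∈ O(H₀) with ‖x − y‖ > ε for all y ∈ S(H₀), the off-diagonal part of x satisfies ‖x − diag(x)‖ > δ, where diag(x) is the diagonal matrix with the same diagonal entries as x. -/
attribute [local instance] Matrix.frobeniusNormedAddCommGroup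

/-- The adjoint orbit of the diagonal matrix `H₀ = diagonal d`. -/
def adjointOrbit (n : ℕ) (d : Fin n → ℂ) : Set (Matrix (Fin n) (Fin n) ℂ) :=
  {x | ∃ g : GL (Fin n) ℂ, x = (g : Matrix (Fin n) (Fin n) ℂ) * Matrix.diagonal d *
        ((g⁻¹ : GL (Fin n) ℂ) : Matrix (Fin n) (Fin n) ℂ)}

/-- The diagonal part of a square matrix. -/
def diagPart {n : ℕ} (x : Matrix (Fin n) (Fin n) ℂ) : Matrix (Fin n) (Fin n) ℂ :=
  Matrix.diagonal (fun i => x i i)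

/-! Matrices with the characteristic polynomial of `H₀` and off-diagonal part of norm at most `1`
form a bounded set: if `z` is a diagonal entry of maximal modulus `M`, the row of `z` in
`z - x` is small, so `|det (z - x)| = ∏ |z - dⱼ|` is `O(Mⁿ⁻¹)`, which forces `M` to be bounded.
Intersected with the closed set of points at distance `≥ ε` from `S(H₀)`, this set is compact,
and the norm of the off-diagonal part has a positive minimum on it: a diagonal matrix with the
characteristic polynomial of `H₀` is a permutation of `H₀`, hence lies in `S(H₀)`. -/

open Matrix Polynomial Bornology

attribute [local instance] Matrix.frobeniusNormedSpace

section Frobenius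

variable {m n α : Type*} [Fintype m] [Fintype n] [NormedAddCommGroup α]

theorem Matrix.norm_entry_le_frobenius_norm (A : Matrix m n α) (i : m) (j : n) :
    ‖A i j‖ ≤ ‖A‖ :=
  (PiLp.norm_apply_le (WithLp.toLp 2 fun j => A i j) j).trans
    (PiLp.norm_apply_le (WithLp.toLp 2 fun i => WithLp.toLp 2 fun j => A i j) i)

theorem Matrix.frobenius_norm_le_of_forall_norm_entry_le (A : Matrix m n α) {c : ℝ}
    (hc : 0 ≤ c) (h : ∀ i j, ‖A i j‖ ≤ c) :
    ‖A‖ ≤ √(Fintype.card m * Fintype.card n) * c := by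
  rw [frobenius_norm_def, ← Real.sqrt_eq_rpow]
  simp only [Real.rpow_two]
  calc √(∑ i, ∑ j, ‖A i j‖ ^ 2) ≤ √(∑ _i : m, ∑ _j : n, c ^ 2) := by
        gcongr with i _ j _
        exact h i j
    _ = √(Fintype.card m * Fintype.card n) * c := by
        simp only [Finset.sum_const, Finset.card_univ, nsmul_eq_mul]
        rw [← mul_assoc, Real.sqrt_mul (by positivity), Real.sqrt_sq hc]

end Frobenius

theorem le_pow_mul_of_div_pow_le_mul_pow_pred {N : ℕ} (hN : N ≠ 0) {u c K : ℝ} (hu : 0 < u)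
    (hc : 0 < c) (h : (u / c) ^ N ≤ K * u ^ (N - 1)) : u ≤ c ^ N * K := by
  have hpow : u ^ N = u ^ (N - 1) * u := by
    rw [← pow_succ, Nat.sub_add_cancel (Nat.pos_of_ne_zero hN)]
  rw [div_pow, div_le_iff₀ (by positivity), hpow] at h
  refine le_of_mul_le_mul_left ?_ (pow_pos hu (N - 1))
  linarith

section Charpoly

variable {ι 𝕜 : Type*} [Fintype ι] [DecidableEq ι]

theorem Matrix.norm_det_le_of_norm_row_le [NormedField 𝕜] (A : Matrix ι ι 𝕜) (i : ι) {a b : ℝ}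
    (ha : 0 ≤ a) (hrow : ∀ k, ‖A i k‖ ≤ a) (hall : ∀ j k, ‖A j k‖ ≤ b) :
    ‖A.det‖ ≤ (Fintype.card ι).factorial * (a * b ^ (Fintype.card ι - 1)) := by
  have hterm (σ : Equiv.Perm ι) :
      ‖Equiv.Perm.sign σ • ∏ j, A (σ j) j‖ ≤ a * b ^ (Fintype.card ι - 1) := by
    have hsign : ‖Equiv.Perm.sign σ • ∏ j, A (σ j) j‖ = ∏ j, ‖A (σ j) j‖ := by
      rcases Int.units_eq_one_or (Equiv.Perm.sign σ) with h | h <;> simp [h]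
    have hmem : σ⁻¹ i ∈ Finset.univ := Finset.mem_univ _
    rw [hsign, ← Finset.mul_prod_erase _ _ hmem]
    refine mul_le_mul (by simpa using hrow (σ⁻¹ i)) ?_ (by positivity) ha
    calc ∏ j ∈ Finset.univ.erase (σ⁻¹ i), ‖A (σ j) j‖
        ≤ ∏ _j ∈ Finset.univ.erase (σ⁻¹ i), b :=
          Finset.prod_le_prod (fun _ _ => norm_nonneg _) (fun j _ => hall _ _)
      _ = b ^ (Fintype.card ι - 1) := by
          rw [Finset.prod_const, Finset.card_erase_of_mem hmem, Finset.card_univ]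
  calc ‖A.det‖ ≤ ∑ σ : Equiv.Perm ι, ‖Equiv.Perm.sign σ • ∏ j, A (σ j) j‖ := by
        rw [det_apply]; exact norm_sum_le _ _
    _ ≤ ∑ _σ : Equiv.Perm ι, a * b ^ (Fintype.card ι - 1) :=
        Finset.sum_le_sum fun σ _ => hterm σ
    _ = (Fintype.card ι).factorial * (a * b ^ (Fintype.card ι - 1)) := by
        rw [Finset.sum_const, Finset.card_univ, Fintype.card_perm, nsmul_eq_mul]

theorem Matrix.det_scalar_sub_eq_prod_of_charpoly_eq [CommRing 𝕜] {x : Matrix ι ι 𝕜}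
    {d : ι → 𝕜} (hx : x.charpoly = (diagonal d).charpoly) (z : 𝕜) :
    (scalar ι z - x).det = ∏ j, (z - d j) := by
  rw [← eval_charpoly, hx, charpoly_diagonal, eval_prod]
  simp

theorem Matrix.norm_diag_le_of_charpoly_eq [NormedField 𝕜] {x : Matrix ι ι 𝕜}
    {d : ι → 𝕜} (hx : x.charpoly = (diagonal d).charpoly) {r : ℝ} (hr : 0 ≤ r)
    (hoff : ∀ j k, j ≠ k → ‖x j k‖ ≤ r) (i : ι) :
    ‖x i i‖ ≤
      2 * ∑ j, ‖d j‖ + r + 4 ^ Fintype.card ι * (Fintype.card ι).factorial * r := by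
  have : Nonempty ι := ⟨i⟩
  set N := Fintype.card ι
  set D := ∑ j, ‖d j‖
  obtain ⟨i₀, hmax⟩ := Finite.exists_max fun j => ‖x j j‖
  set z := x i₀ i₀
  set M := ‖z‖
  have hD : 0 ≤ D := by positivity
  refine (hmax i).trans ?_
  by_cases hsmall : 2 * M ≤ 4 * D + r
  · linarith [show 0 ≤ (4 : ℝ) ^ N * N.factorial * r by positivity]
  set u := 2 * M + r
  have hu : 0 < u := by linarith
  have hrow (k : ι) : ‖(scalar ι z - x) i₀ k‖ ≤ r := by
    rcases eq_or_ne i₀ k with rfl | hk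
    · simpa [z] using hr
    · simpa [hk] using hoff i₀ k hk
  have hall (j k : ι) : ‖(scalar ι z - x) j k‖ ≤ u := by
    rcases eq_or_ne j k with rfl | hjk
    · have := hmax j
      simp only [sub_apply, scalar_apply, diagonal_apply_eq]
      linarith [norm_sub_le z (x j j)]
    · have := hoff j k hjk
      simp only [sub_apply, scalar_apply, diagonal_apply_ne _ hjk, zero_sub, norm_neg]
      linarith [norm_nonneg z]
  have hfar (j : ι) : u / 4 ≤ ‖z - d j‖ := by
    have : ‖d j‖ ≤ D :=
      Finset.single_le_sum (f := fun j => ‖d j‖) (fun j _ => norm_nonneg _) (Finset.mem_univ j)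
    linarith [norm_sub_norm_le z (d j)]
  have hdet : (u / 4) ^ N ≤ N.factorial * r * u ^ (N - 1) := by
    calc (u / 4) ^ N = ∏ _j : ι, u / 4 := by rw [Finset.prod_const, Finset.card_univ]
      _ ≤ ∏ j, ‖z - d j‖ := Finset.prod_le_prod (fun _ _ => by positivity) fun j _ => hfar j
      _ = ‖(scalar ι z - x).det‖ := by
          rw [det_scalar_sub_eq_prod_of_charpoly_eq hx, norm_prod]
      _ ≤ N.factorial * (r * u ^ (N - 1)) := norm_det_le_of_norm_row_le _ i₀ hr hrow hall
      _ = N.factorial * r * u ^ (N - 1) := by ring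
  have := le_pow_mul_of_div_pow_le_mul_pow_pred Fintype.card_ne_zero hu (by norm_num) hdet
  linarith

theorem Matrix.isClosed_setOf_charpoly_eq [Field 𝕜] [Infinite 𝕜] [TopologicalSpace 𝕜]
    [IsTopologicalRing 𝕜] [T1Space 𝕜] (p : 𝕜[X]) :
    IsClosed {x : Matrix ι ι 𝕜 | x.charpoly = p} := by
  have hset : {x : Matrix ι ι 𝕜 | x.charpoly = p} =
      ⋂ t, {x | (scalar ι t - x).det = p.eval t} := by
    ext x
    simp only [Set.mem_ofPred_eq, Set.mem_iInter, ← eval_charpoly]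
    exact ⟨fun h t => h ▸ rfl, Polynomial.funext⟩
  rw [hset]
  exact isClosed_iInter fun t =>
    isClosed_eq (continuous_const.sub continuous_id).matrix_det continuous_const

theorem Matrix.isBounded_setOf_charpoly_eq_of_norm_offDiag_le [NormedField 𝕜] (d : ι → 𝕜) {r : ℝ}
    (hr : 0 ≤ r) :
    IsBounded {x : Matrix ι ι 𝕜 | x.charpoly = (diagonal d).charpoly ∧
      ∀ j k, j ≠ k → ‖x j k‖ ≤ r} := by
  set C := 2 * ∑ j, ‖d j‖ + r + 4 ^ Fintype.card ι * (Fintype.card ι).factorial * r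
  have hrC : r ≤ C := by
    have : 0 ≤ 2 * ∑ j, ‖d j‖ + 4 ^ Fintype.card ι * (Fintype.card ι).factorial * r := by
      positivity
    linarith
  refine isBounded_iff_forall_norm_le.2 ⟨_, fun x ⟨hx, hoff⟩ =>
    frobenius_norm_le_of_forall_norm_entry_le x (hr.trans hrC) fun j k => ?_⟩
  rcases eq_or_ne j k with rfl | hjk
  · exact norm_diag_le_of_charpoly_eq hx hr hoff j
  · exact (hoff j k hjk).trans hrC

end Charpoly

theorem Polynomial.roots_prod_univ_X_sub_C {ι R : Type*} [Fintype ι] [CommRing R] [IsDomain R]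
    (e : ι → R) : (∏ i, (X - C (e i))).roots = Finset.univ.val.map e := by
  rw [Finset.prod_eq_multiset_prod, ← roots_multiset_prod_X_sub_C (Finset.univ.val.map e),
    Multiset.map_map]
  rfl

theorem Equiv.Perm.exists_eq_comp_of_map_univ_eq {ι β : Type*} [Fintype ι] {f g : ι → β}
    (h : Finset.univ.val.map f = Finset.univ.val.map g) :
    ∃ σ : Equiv.Perm ι, f = g ∘ σ := by
  classical
  have hfiber (b : β) : Fintype.card {i // f i = b} = Fintype.card {i // g i = b} := by
    have := congrArg (Multiset.count b) h
    rw [Multiset.count_map, Multiset.count_map] at this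
    rw [Fintype.card_subtype, Fintype.card_subtype]
    simpa [Finset.filter, eq_comm] using this
  let e (b : β) : {i // f i = b} ≃ {i // g i = b} := Fintype.equivOfCardEq (hfiber b)
  exact ⟨Equiv.ofFiberEquiv e, funext fun i => (Equiv.ofFiberEquiv_map e i).symm⟩

theorem isClosed_setOf_forall_le_norm_sub {E : Type*} [SeminormedAddCommGroup E] (S : Set E)
    (ε : ℝ) : IsClosed {x : E | ∀ y ∈ S, ε ≤ ‖x - y‖} := by
  simp only [Set.ofPred_forall]
  exact isClosed_iInter fun y => isClosed_iInter fun _ =>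
    isClosed_le continuous_const (continuous_id.sub continuous_const).norm

section AdjointOrbit

variable {n : ℕ} {d : Fin n → ℂ}

theorem charpoly_eq_of_mem_adjointOrbit {x : Matrix (Fin n) (Fin n) ℂ}
    (hx : x ∈ adjointOrbit n d) : x.charpoly = (diagonal d).charpoly := by
  obtain ⟨g, rfl⟩ := hx
  rw [coe_units_inv]
  exact charpoly_units_conj g _

theorem diagonal_comp_perm_mem_adjointOrbit (σ : Equiv.Perm (Fin n)) :
    diagonal (d ∘ σ) ∈ adjointOrbit n d := by
  let g : GL (Fin n) ℂ :=
    ⟨σ.permMatrix ℂ, σ⁻¹.permMatrix ℂ, by rw [← permMatrix_mul, inv_mul_cancel, permMatrix_one],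
      by rw [← permMatrix_mul, mul_inv_cancel, permMatrix_one]⟩
  refine ⟨g, ?_⟩
  show _ = σ.toPEquiv.toMatrix * diagonal d * σ⁻¹.toPEquiv.toMatrix
  rw [PEquiv.toMatrix_toPEquiv_mul, PEquiv.mul_toMatrix_toPEquiv]
  exact (submatrix_diagonal_equiv d σ).symm

theorem mem_adjointOrbit_of_isDiag_of_charpoly_eq {y : Matrix (Fin n) (Fin n) ℂ} (hy : y.IsDiag)
    (hchar : y.charpoly = (diagonal d).charpoly) : y ∈ adjointOrbit n d := by
  rw [← hy.diagonal_diag] at hchar ⊢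
  have hroots := congrArg roots hchar
  rw [charpoly_diagonal, charpoly_diagonal, roots_prod_univ_X_sub_C,
    roots_prod_univ_X_sub_C] at hroots
  obtain ⟨σ, hσ⟩ := Equiv.Perm.exists_eq_comp_of_map_univ_eq hroots
  rw [hσ]
  exact diagonal_comp_perm_mem_adjointOrbit σ

theorem norm_entry_le_norm_sub_diagPart (x : Matrix (Fin n) (Fin n) ℂ) {j k : Fin n}
    (hjk : j ≠ k) : ‖x j k‖ ≤ ‖x - diagPart x‖ := by
  simpa [diagPart, diagonal_apply_ne _ hjk] using
    norm_entry_le_frobenius_norm (x - diagPart x) j k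

theorem norm_sub_diagPart_pos_of_charpoly_eq {x : Matrix (Fin n) (Fin n) ℂ} {ε : ℝ} (hε : 0 < ε)
    (hx : x.charpoly = (diagonal d).charpoly)
    (hfar : ∀ y ∈ {y ∈ adjointOrbit n d | y.IsDiag}, ε ≤ ‖x - y‖) : 0 < ‖x - diagPart x‖ := by
  refine norm_pos_iff.2 fun h0 => ?_
  have hdiag : x.IsDiag := by
    rw [sub_eq_zero.1 h0]
    exact isDiag_diagonal _
  have := hfar x ⟨mem_adjointOrbit_of_isDiag_of_charpoly_eq hdiag hx, hdiag⟩
  rw [sub_self, norm_zero] at this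
  linarith

theorem continuous_norm_sub_diagPart :
    Continuous fun x : Matrix (Fin n) (Fin n) ℂ => ‖x - diagPart x‖ :=
  (continuous_id.sub <| .matrix_diagonal <| continuous_pi fun i =>
    continuous_id.matrix_elem i i).norm

end AdjointOrbit

theorem offDiagonal_part_bddBelow_away_from_singularities_general
    (n : ℕ) (d : Fin n → ℂ) :
    ∀ ε > (0 : ℝ), ∃ δ > (0 : ℝ), ∀ x ∈ adjointOrbit n d,
      (∀ y ∈ adjointOrbit n d, y.IsDiag → ε < ‖x - y‖) →
      δ < ‖x - diagPart x‖ := by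
  intro ε hε
  set K := {x : Matrix (Fin n) (Fin n) ℂ | x.charpoly = (diagonal d).charpoly} ∩
    {x | ‖x - diagPart x‖ ≤ 1} ∩ {x | ∀ y ∈ {y ∈ adjointOrbit n d | y.IsDiag}, ε ≤ ‖x - y‖}
  have hK : IsCompact K := by
    have : ProperSpace (Matrix (Fin n) (Fin n) ℂ) := FiniteDimensional.proper ℂ _
    refine Metric.isCompact_of_isClosed_isBounded ?_ ?_
    · exact ((isClosed_setOf_charpoly_eq _).inter (isClosed_le continuous_norm_sub_diagPart
        continuous_const)).inter (isClosed_setOf_forall_le_norm_sub _ ε)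
    · exact (isBounded_setOf_charpoly_eq_of_norm_offDiag_le d zero_le_one).subset
        fun x ⟨⟨hx, hx1⟩, _⟩ =>
          ⟨hx, fun j k hjk => (norm_entry_le_norm_sub_diagPart x hjk).trans hx1⟩
  have hpos : ∀ x ∈ K, 0 < ‖x - diagPart x‖ := fun x ⟨⟨hx, _⟩, hfar⟩ =>
    norm_sub_diagPart_pos_of_charpoly_eq hε hx hfar
  obtain ⟨a, ha, haK⟩ := hK.exists_forall_le' continuous_norm_sub_diagPart.continuousOn hpos
  refine ⟨min a 1 / 2, by positivity, fun x hx hfar => ?_⟩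
  by_contra! hle
  have hxK : x ∈ K := ⟨⟨charpoly_eq_of_mem_adjointOrbit hx,
    show ‖x - diagPart x‖ ≤ 1 by linarith [min_le_right a 1]⟩,
    fun y hy => (hfar y hy.1 hy.2).le⟩
  linarith [haK x hxK, min_le_left a 1]

/-- Let `H₀ = diagonal d` be a traceless complex diagonal matrix, `O(H₀)` its adjoint
orbit and `S(H₀)` the set of diagonal matrices lying in `O(H₀)`.  For every `ε > 0`
there is a `δ > 0` such that every `x ∈ O(H₀)` at distance greater than `ε` from all
points of `S(H₀)` has off-diagonal part of norm greater than `δ`. -/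
theorem offDiagonal_part_bddBelow_away_from_singularities
    (n : ℕ) (d : Fin n → ℂ) (htr : Matrix.trace (Matrix.diagonal d) = 0) :
    ∀ ε > (0 : ℝ), ∃ δ > (0 : ℝ), ∀ x ∈ adjointOrbit n d,
      (∀ y ∈ adjointOrbit n d, y.IsDiag → ε < ‖x - y‖) →
      δ < ‖x - diagPart x‖ :=
  offDiagonal_part_bddBelow_away_from_singularities_general n d
end

section
/- Let H be an n×n real diagonal matrix, θ ∈ ℝ, and let Z(x) = ‖⁅x,H⁆‖⁻² · ⁅x, ⁅xᴴ, H⁆⁆. Suppose I ⊆ ℝ is an interval containing 0 and γ : ℝ → (n×n complex matrices) satisfies, for every t ∈ I, that ⁅γ(t), H⁆ ≠ 0 and γ has derivative e^{iθ} · Z(γ(t)) at t. Then for every t ∈ I one has trace(γ(t)·H) = trace(γ(0)·H) + t·e^{iθ}. (Along the flow of e^{iθ}Z, the height function f_H moves at constant unit speed in the direction e^{iθ}.) -/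
/-!
By invariance of the trace form, `trace (⁅x, A⁆ * H) = trace (A * ⁅H, x⁆)`, and for Hermitian `H`
also `⁅xᴴ, H⁆ = ⁅H, x⁆ᴴ`; hence `trace (⁅x, ⁅xᴴ, H⁆⁆ * H) = ‖⁅x, H⁆‖²`, i.e. `trace (Z x * H) = 1`.
So along an integral curve of `e^{iθ} Z` the height `trace (γ t * H)` has constant derivative
`e^{iθ}` on the interval `I`, and the mean value inequality makes it affine there.
-/

open Matrix

attribute [local instance] Matrix.frobeniusNormedAddCommGroup Matrix.frobeniusNormedSpace

/-- The real diagonal matrix `H`, viewed as a complex matrix. -/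
noncomputable def Hmat (n : ℕ) (h : Fin n → ℝ) : Matrix (Fin n) (Fin n) ℂ :=
  Matrix.diagonal (fun i => (h i : ℂ))

/-- The transversal vector field `Z(x) = ‖⁅x,H⁆‖⁻² • ⁅x, ⁅xᴴ, H⁆⁆`. -/
noncomputable def Zfield (n : ℕ) (h : Fin n → ℝ) :
    Matrix (Fin n) (Fin n) ℂ → Matrix (Fin n) (Fin n) ℂ :=
  fun x => (‖⁅x, Hmat n h⁆‖ ^ 2)⁻¹ • ⁅x, ⁅xᴴ, Hmat n h⁆⁆

theorem Set.OrdConnected.eq_add_smul_of_hasDerivWithinAt {E : Type*} [NormedAddCommGroup E]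
    [NormedSpace ℝ E] {I : Set ℝ} (hI : I.OrdConnected) {f : ℝ → E} {c : E}
    (hf : ∀ s ∈ I, HasDerivWithinAt f c I s) {a t : ℝ} (ha : a ∈ I) (ht : t ∈ I) :
    f t = f a + (t - a) • c := by
  set g : ℝ → E := fun s => f s - s • c
  have hg : ∀ s ∈ I, HasDerivWithinAt g 0 I s := fun s hs =>
    ((hf s hs).sub ((hasDerivWithinAt_id s I).smul_const c)).congr_deriv (by simp)
  have hgt : ‖g t - g a‖ ≤ 0 * ‖t - a‖ :=
    hI.convex.norm_image_sub_le_of_norm_hasDerivWithin_le hg (fun _ _ => norm_zero.le) ha ht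
  rw [zero_mul, norm_le_zero_iff, sub_eq_zero] at hgt
  simp only [g] at hgt
  rw [sub_smul]
  linear_combination (norm := module) hgt

namespace Matrix

variable {n : Type*} [Fintype n]

theorem trace_lie_mul {R : Type*} [CommRing R] (A B C : Matrix n n R) :
    trace (⁅A, B⁆ * C) = trace (B * ⁅C, A⁆) := by
  simp only [Ring.lie_def, sub_mul, mul_sub, trace_sub, Matrix.mul_assoc]
  rw [trace_mul_comm A, Matrix.mul_assoc]

theorem conjTranspose_lie {R : Type*} [Ring R] [StarRing R] (A B : Matrix n n R) :
    ⁅A, B⁆ᴴ = ⁅Bᴴ, Aᴴ⁆ := by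
  simp only [Ring.lie_def, conjTranspose_sub, conjTranspose_mul]

variable {𝕜 : Type*} [RCLike 𝕜]

theorem frobenius_norm_sq_eq_trace {m : Type*} [Fintype m] (A : Matrix m n 𝕜) :
    ((‖A‖ ^ 2 : ℝ) : 𝕜) = trace (Aᴴ * A) := by
  have hnorm : ‖A‖ ^ 2 = ∑ i, ∑ j, ‖A i j‖ ^ 2 := by
    rw [frobenius_norm_def, ← Real.rpow_natCast, ← Real.rpow_mul (by positivity)]
    norm_num
  simp only [hnorm, trace, diag_apply, mul_apply, conjTranspose_apply, RCLike.star_def,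
    RCLike.conj_mul, map_sum, map_pow]
  exact Finset.sum_comm

theorem IsHermitian.trace_lie_lie_conjTranspose_mul {H : Matrix n n 𝕜} (hH : H.IsHermitian)
    (x : Matrix n n 𝕜) : trace (⁅x, ⁅xᴴ, H⁆⁆ * H) = ((‖⁅x, H⁆‖ ^ 2 : ℝ) : 𝕜) := by
  have hA : ⁅xᴴ, H⁆ = ⁅H, x⁆ᴴ := by rw [conjTranspose_lie, hH.eq]
  rw [trace_lie_mul, hA, ← frobenius_norm_sq_eq_trace, Ring.lie_def, Ring.lie_def, norm_sub_rev]

end Matrix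

theorem HasDerivAt.trace_mul_const {n 𝕜 : Type*} [Fintype n] [RCLike 𝕜]
    {γ : ℝ → Matrix n n 𝕜} {γ' : Matrix n n 𝕜} {t : ℝ} (hγ : HasDerivAt γ γ' t)
    (H : Matrix n n 𝕜) : HasDerivAt (fun s => trace (γ s * H)) (trace (γ' * H)) t :=
  let L : Matrix n n 𝕜 →L[𝕜] 𝕜 :=
    LinearMap.toContinuousLinearMap ((traceLinearMap n 𝕜 𝕜).comp (LinearMap.mulRight 𝕜 H))
  (L.restrictScalars ℝ).hasFDerivAt.comp_hasDerivAt t hγ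

theorem isHermitian_Hmat (n : ℕ) (h : Fin n → ℝ) : (Hmat n h).IsHermitian :=
  isHermitian_diagonal_of_self_adjoint _ (funext fun i => Complex.conj_ofReal (h i))

theorem trace_Zfield_mul_Hmat {n : ℕ} (h : Fin n → ℝ) {x : Matrix (Fin n) (Fin n) ℂ}
    (hx : ⁅x, Hmat n h⁆ ≠ 0) : trace (Zfield n h x * Hmat n h) = 1 := by
  have hnorm : ‖⁅x, Hmat n h⁆‖ ^ 2 ≠ 0 := pow_ne_zero 2 (norm_ne_zero_iff.2 hx)
  rw [Zfield, smul_mul, trace_smul, (isHermitian_Hmat n h).trace_lie_lie_conjTranspose_mul,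
    RCLike.real_smul_eq_coe_mul, ← RCLike.ofReal_mul, inv_mul_cancel₀ hnorm, RCLike.ofReal_one]

/-- Along an integral curve `γ` of the vector field `e^{iθ} Z` (defined on an interval
`I` containing `0`, along which `⁅γ t, H⁆ ≠ 0`), the height function
`f_H(x) = trace (x * H)` moves with constant unit speed in the direction `e^{iθ}`:
`trace (γ t * H) = trace (γ 0 * H) + t * e^{iθ}`. -/
theorem height_function_along_flow
    (n : ℕ) (h : Fin n → ℝ) (θ : ℝ)
    (I : Set ℝ) (hI : I.OrdConnected) (h0 : (0 : ℝ) ∈ I)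
    (γ : ℝ → Matrix (Fin n) (Fin n) ℂ)
    (hne : ∀ t ∈ I, ⁅γ t, Hmat n h⁆ ≠ 0)
    (hderiv : ∀ t ∈ I,
      HasDerivAt γ (Complex.exp (θ * Complex.I) • Zfield n h (γ t)) t) :
    ∀ t ∈ I, Matrix.trace (γ t * Hmat n h) =
      Matrix.trace (γ 0 * Hmat n h) + t * Complex.exp (θ * Complex.I) := by
  have hslope : ∀ s ∈ I, HasDerivWithinAt (fun s => trace (γ s * Hmat n h))
      (Complex.exp (θ * Complex.I)) I s := fun s hs => by
    have hs' := ((hderiv s hs).trace_mul_const (Hmat n h)).hasDerivWithinAt (s := I)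
    rwa [smul_mul, trace_smul, trace_Zfield_mul_Hmat h (hne s hs), smul_eq_mul, mul_one] at hs'
  intro t ht
  rw [hI.eq_add_smul_of_hasDerivWithinAt hslope h0 ht, sub_zero, Complex.real_smul]
end
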